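/- arXiv:2503.02153 — 4 statements merged into one kernel-verified Lean document; each statement's English description precedes it below -/
import Mathlib

section
/- Let S ∈ SL(2,ℝ) and let P be the rank-one orthogonal projection onto a nonzero vector v ∈ ℝ². Then S⁻¹ J P S = c · J Q, where c > 0 is a positive real constant and Q is the rank-one orthogonal projection onto Sᵀ v. -/
/-! For `S` of determinant one, `S⁻¹ = adj S` and `adj S * J = J * Sᵀ`, so
`S⁻¹ J (v vᵀ) S = J (Sᵀ v)(Sᵀ v)ᵀ`; normalising both rank-one matrices gives
`c = |Sᵀ v|² / |v|²`. -/

open Matrix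

noncomputable def Jmat : Matrix (Fin 2) (Fin 2) ℝ := !![0, -1; 1, 0]

/-- The orthogonal projection onto the line spanned by a nonzero vector `v ∈ ℝ²`. -/
noncomputable def projOnto (v : Fin 2 → ℝ) : Matrix (Fin 2) (Fin 2) ℝ :=
  ((v 0) ^ 2 + (v 1) ^ 2)⁻¹ • vecMulVec v v

theorem dotProduct_self_pos {n R : Type*} [Fintype n] [Ring R] [LinearOrder R]
    [IsStrictOrderedRing R] {v : n → R} (hv : v ≠ 0) : 0 < v ⬝ᵥ v :=
  (Fintype.sum_nonneg fun i => mul_self_nonneg (v i)).lt_of_ne'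
    (dotProduct_self_eq_zero.not.mpr hv)

theorem projOnto_eq_inv_dotProduct_smul (v : Fin 2 → ℝ) :
    projOnto v = (v ⬝ᵥ v)⁻¹ • vecMulVec v v := by
  simp [projOnto, dotProduct, Fin.sum_univ_two, sq]

theorem dotProduct_self_smul_projOnto {v : Fin 2 → ℝ} (hv : v ≠ 0) :
    (v ⬝ᵥ v) • projOnto v = vecMulVec v v := by
  rw [projOnto_eq_inv_dotProduct_smul, smul_smul,
    mul_inv_cancel₀ (dotProduct_self_pos hv).ne', one_smul]

theorem adjugate_mul_Jmat (A : Matrix (Fin 2) (Fin 2) ℝ) : adjugate A * Jmat = Jmat * Aᵀ := by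
  rw [adjugate_fin_two, Jmat, eta_fin_two Aᵀ]
  simp [transpose_apply]

theorem coe_inv_mul_Jmat (S : SpecialLinearGroup (Fin 2) ℝ) :
    (↑(S⁻¹) : Matrix (Fin 2) (Fin 2) ℝ) * Jmat = Jmat * (↑S : Matrix (Fin 2) (Fin 2) ℝ)ᵀ :=
  adjugate_mul_Jmat S

theorem transpose_mul_vecMulVec_self_mul {n : Type*} [Fintype n] {R : Type*} [CommSemiring R]
    (A : Matrix n n R) (v : n → R) :
    Aᵀ * vecMulVec v v * A = vecMulVec (Aᵀ *ᵥ v) (Aᵀ *ᵥ v) := by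
  rw [mul_vecMulVec, vecMulVec_mul, mulVec_transpose]

theorem conj_JP (S : Matrix.SpecialLinearGroup (Fin 2) ℝ) (v : Fin 2 → ℝ) (hv : v ≠ 0) :
    ∃ c : ℝ, 0 < c ∧
      (↑(S⁻¹) : Matrix (Fin 2) (Fin 2) ℝ) * Jmat * projOnto v * (↑S : Matrix (Fin 2) (Fin 2) ℝ) =
        c • (Jmat * projOnto ((↑S : Matrix (Fin 2) (Fin 2) ℝ)ᵀ.mulVec v)) := by
  set w := (↑S : Matrix (Fin 2) (Fin 2) ℝ)ᵀ *ᵥ v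
  have hw : w ≠ 0 := by
    simpa [w] using (mulVec_injective_of_det_ne_zero (M := (↑S)ᵀ) (by simp)).ne hv
  refine ⟨(w ⬝ᵥ w) / (v ⬝ᵥ v),
    div_pos (dotProduct_self_pos hw) (dotProduct_self_pos hv), ?_⟩
  calc _
      = (v ⬝ᵥ v)⁻¹ • (Jmat * ((↑S)ᵀ * vecMulVec v v * ↑S)) := by
        rw [coe_inv_mul_Jmat, projOnto_eq_inv_dotProduct_smul]
        simp only [Matrix.mul_smul, Matrix.smul_mul, Matrix.mul_assoc]
    _ = (v ⬝ᵥ v)⁻¹ • (Jmat * vecMulVec w w) := by rw [transpose_mul_vecMulVec_self_mul]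
    _ = ((w ⬝ᵥ w) / (v ⬝ᵥ v)) • (Jmat * projOnto w) := by
        rw [← dotProduct_self_smul_projOnto hw, Matrix.mul_smul, smul_smul, div_eq_inv_mul]
end

section
/- If F is a Herglotz function with F not identically 0, then either y·|F(iy)| → ∞ as y → ∞, or the limit c = lim_{y→∞} −i y F(iy) exists and c > 0. -/
open Complex Filter Set Metric ComplexConjugate Topology

namespace HerglotzAux

def U : Set ℂ := {z : ℂ | 0 < z.im}

lemma isOpen_U : IsOpen U := isOpen_lt continuous_const Complex.continuous_im

lemma preconnected_U : IsPreconnected U :=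
  (convex_halfSpace_im_gt (0:ℝ)).isPreconnected

lemma mem_U {y : ℝ} (hy : 0 < y) : Complex.I * y ∈ U := by
  simp [U, hy]

/-- Schwarz–Pick along the imaginary axis. -/
lemma sp {G : ℂ → ℂ} (hd : DifferentiableOn ℂ G U) (hm : ∀ z ∈ U, 0 < (G z).im)
    {y t : ℝ} (hy : 0 < y) (ht : 0 < t) :
    ‖G (I * t) - G (I * y)‖ ≤
      (|t - y| / (t + y)) * ‖G (I * t) - conj (G (I * y))‖ := by
  set a : ℂ := G (I * y) with ha
  have hβ : 0 < a.im := hm _ (mem_U hy)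
  set ψ : ℂ → ℂ := fun ζ => I * y * (1 + ζ) / (1 - ζ) with hψ
  set φ : ℂ → ℂ := fun w => (w - a) / (w - conj a) with hφ
  -- ψ maps the unit ball into U
  have hψmem : ∀ ζ ∈ ball (0:ℂ) 1, ψ ζ ∈ U := by
    intro ζ hζ
    have habs : ‖ζ‖ < 1 := mem_ball_zero_iff.mp hζ
    have h1 : Complex.normSq ζ < 1 := by
      nlinarith [Complex.sq_norm ζ, norm_nonneg ζ]
    have hden : (1 : ℂ) - ζ ≠ 0 := by
      intro h
      have : ζ = 1 := by linear_combination -h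
      rw [this] at habs; simp at habs
    have hns : 0 < Complex.normSq (1 - ζ) := Complex.normSq_pos.mpr hden
    show 0 < (ψ ζ).im
    rw [hψ]
    simp only [Complex.div_im]
    have hre : (I * ↑y * (1 + ζ)).re = -(y * ζ.im) := by simp
    have him : (I * ↑y * (1 + ζ)).im = y * (1 + ζ.re) := by simp
    have h2 : Complex.normSq ζ = ζ.re^2 + ζ.im^2 := by simp [Complex.normSq_apply]; ring
    rw [hre, him, Complex.sub_re, Complex.sub_im, Complex.one_re, Complex.one_im,
      div_sub_div_same, lt_div_iff₀ hns]
    nlinarith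
  -- φ maps U into the unit ball
  have hφmem : ∀ w ∈ U, φ w ∈ ball (0:ℂ) 1 := by
    intro w hw
    have hwim : 0 < w.im := hw
    have hden : w - conj a ≠ 0 := by
      intro h
      have h2 : (w - conj a).im = 0 := by rw [h]; simp
      rw [Complex.sub_im, Complex.conj_im] at h2
      linarith
    rw [mem_ball_zero_iff, hφ]
    show ‖(w - a)/(w - conj a)‖ < 1
    rw [norm_div, div_lt_one (norm_pos_iff.mpr hden)]
    have h3 : Complex.normSq (w - a) < Complex.normSq (w - conj a) := by
      rw [Complex.normSq_apply, Complex.normSq_apply]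
      simp only [Complex.sub_re, Complex.sub_im, Complex.conj_re, Complex.conj_im]
      nlinarith
    have := Real.sqrt_lt_sqrt (Complex.normSq_nonneg _) h3
    rwa [← Complex.norm_def, ← Complex.norm_def] at this
  -- differentiability of the composition
  have hψdiff : DifferentiableOn ℂ ψ (ball (0:ℂ) 1) := by
    apply DifferentiableOn.div
    · exact (differentiable_const _).differentiableOn.mul
        ((differentiable_const _).add differentiable_id).differentiableOn
    · exact ((differentiable_const _).sub differentiable_id).differentiableOn
    · intro ζ hζ
      have habs : ‖ζ‖ < 1 := mem_ball_zero_iff.mp hζ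
      intro h
      have : ζ = 1 := by linear_combination -h
      rw [this] at habs; simp at habs
  have hGψ : DifferentiableOn ℂ (fun ζ => G (ψ ζ)) (ball (0:ℂ) 1) :=
    hd.comp hψdiff hψmem
  have hdenU : ∀ w ∈ U, w - conj a ≠ 0 := by
    intro w hw h
    have hwim : 0 < w.im := hw
    have h2 : (w - conj a).im = 0 := by rw [h]; simp
    rw [Complex.sub_im, Complex.conj_im] at h2
    linarith
  have hcomp : DifferentiableOn ℂ (fun ζ => φ (G (ψ ζ))) (ball (0:ℂ) 1) := by
    apply DifferentiableOn.div
    · exact hGψ.sub (differentiableOn_const _)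
    · exact hGψ.sub (differentiableOn_const _)
    · intro ζ hζ
      exact hdenU _ (hm _ (hψmem ζ hζ))
  have hψ0 : ψ 0 = I * y := by rw [hψ]; simp
  have h0 : φ (G (ψ 0)) = 0 := by
    rw [hψ0, hφ]
    simp [← ha]
  have hmaps : MapsTo (fun ζ => φ (G (ψ ζ))) (ball (0:ℂ) 1)
      (ball (φ (G (ψ 0))) 1) := by
    rw [h0]
    intro ζ hζ
    exact hφmem _ (hm _ (hψmem ζ hζ))
  set ζ₀ : ℂ := (((t - y) / (t + y) : ℝ) : ℂ) with hζ₀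
  have hty : (0:ℝ) < t + y := by linarith
  have hζ₀mem : ζ₀ ∈ ball (0:ℂ) 1 := by
    rw [mem_ball_zero_iff, hζ₀]
    rw [Complex.norm_real, Real.norm_eq_abs, abs_div, abs_of_pos hty, div_lt_one hty]
    rw [abs_lt]; constructor <;> linarith
  have hψζ₀ : ψ ζ₀ = I * t := by
    have hne : (1:ℂ) - ζ₀ ≠ 0 := by
      intro h
      have h2 : ζ₀ = 1 := by linear_combination -h
      have := mem_ball_zero_iff.mp hζ₀mem
      rw [h2] at this; simp at this
    have h1 : ((t + y : ℝ) : ℂ) ≠ 0 := by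
      exact_mod_cast (ne_of_gt hty)
    show I * ↑y * (1 + ζ₀) / (1 - ζ₀) = I * t
    rw [div_eq_iff hne, hζ₀]
    have h1' : (t:ℂ) + (y:ℂ) ≠ 0 := by push_cast at h1; exact h1
    push_cast
    field_simp
    ring
  have key := Complex.dist_le_div_mul_dist_of_mapsTo_ball hcomp (hmaps.mono_right ball_subset_closedBall) hζ₀mem
  rw [h0, hψζ₀, dist_zero_right, dist_zero_right] at key
  have key2 : ‖φ (G (I * t))‖ ≤ |t - y| / (t + y) := by
    calc ‖φ (G (I * t))‖ = ‖φ (G (I * ↑t))‖ := rfl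
    _ ≤ 1 / 1 * ‖ζ₀‖ := key
    _ = |t - y| / (t + y) := by
        rw [one_div_one, one_mul, hζ₀, Complex.norm_real, Real.norm_eq_abs,
          abs_div, abs_of_pos hty]
  have hWden : G (I * t) - conj a ≠ 0 := hdenU _ (hm _ (mem_U ht))
  rw [hφ] at key2
  simp only [norm_div] at key2
  rw [div_le_iff₀ (norm_pos_iff.mpr hWden)] at key2
  exact key2


/-- The disk inequality: `G(it)` lies in an explicit disk determined by `G(iy)`. -/
lemma disk {G : ℂ → ℂ} (hd : DifferentiableOn ℂ G U) (hm : ∀ z ∈ U, 0 < (G z).im)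
    {y t : ℝ} (hy : 0 < y) (hyt : y ≤ t) :
    ((G (I*t)).re - (G (I*y)).re)^2 * (2*t*y)^2
      + ((G (I*t)).im * (2*t*y) - (G (I*y)).im*(t^2+y^2))^2
      ≤ ((G (I*y)).im*(t^2-y^2))^2 := by
  have ht : 0 < t := lt_of_lt_of_le hy hyt
  have hty : (0:ℝ) < t + y := by linarith
  set x := (G (I*t)).re
  set v := (G (I*t)).im
  set α := (G (I*y)).re
  set β := (G (I*y)).im
  have hsp := sp hd hm hy ht
  rw [_root_.abs_of_nonneg (by linarith : (0:ℝ) ≤ t - y)] at hsp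
  have h1 : Complex.normSq (G (I*t) - G (I*y))
      ≤ ((t-y)/(t+y))^2 * Complex.normSq (G (I*t) - conj (G (I*y))) := by
    have h2 := mul_self_le_mul_self (norm_nonneg _) hsp
    rw [← Complex.sq_norm, ← Complex.sq_norm]
    nlinarith [norm_nonneg (G (I*t) - G (I*y)),
      norm_nonneg (G (I*t) - conj (G (I*y)))]
  rw [Complex.normSq_apply, Complex.normSq_apply] at h1
  simp only [Complex.sub_re, Complex.sub_im, Complex.conj_re, Complex.conj_im] at h1
  rw [div_pow, div_mul_eq_mul_div, le_div_iff₀ (by positivity : (0:ℝ) < (t+y)^2)] at h1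
  -- h1 : ((x-α)^2 + (v-β)^2) * (t+y)^2 ≤ (t-y)^2 * ((x-α)^2 + (v+β)^2)
  nlinarith [mul_nonneg (mul_nonneg ht.le hy.le) (sub_nonneg.2 h1)]

lemma abs_le_of_sq_le {a c : ℝ} (h : a^2 ≤ c^2) (hc : 0 ≤ c) : |a| ≤ c := by
  have h1 : Real.sqrt (a^2) ≤ Real.sqrt (c^2) := Real.sqrt_le_sqrt h
  rwa [Real.sqrt_sq_eq_abs, Real.sqrt_sq hc] at h1

/-- Upper bound for the real part drift. -/
lemma re_bound {G : ℂ → ℂ} (hd : DifferentiableOn ℂ G U) (hm : ∀ z ∈ U, 0 < (G z).im)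
    {y t : ℝ} (hy : 0 < y) (hyt : y ≤ t) :
    |(G (I*t)).re - (G (I*y)).re| * (2*t*y) ≤ (G (I*y)).im * (t^2 - y^2) := by
  have h := disk hd hm hy hyt
  have ht : 0 < t := lt_of_lt_of_le hy hyt
  have hβ : 0 < (G (I*y)).im := hm _ (mem_U hy)
  have h2 : (((G (I*t)).re - (G (I*y)).re) * (2*t*y))^2 ≤ ((G (I*y)).im*(t^2-y^2))^2 := by
    nlinarith [sq_nonneg ((G (I*t)).im * (2*t*y) - (G (I*y)).im*(t^2+y^2))]
  have h3 := abs_le_of_sq_le h2 (mul_nonneg hβ.le (by nlinarith : (0:ℝ) ≤ t^2 - y^2))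
  rwa [abs_mul, _root_.abs_of_pos (by positivity : (0:ℝ) < 2*t*y)] at h3

/-- Two-sided bound for the imaginary part. -/
lemma im_bound {G : ℂ → ℂ} (hd : DifferentiableOn ℂ G U) (hm : ∀ z ∈ U, 0 < (G z).im)
    {y t : ℝ} (hy : 0 < y) (hyt : y ≤ t) :
    |(G (I*t)).im * (2*t*y) - (G (I*y)).im*(t^2+y^2)| ≤ (G (I*y)).im * (t^2 - y^2) := by
  have h := disk hd hm hy hyt
  have ht : 0 < t := lt_of_lt_of_le hy hyt
  have hβ : 0 < (G (I*y)).im := hm _ (mem_U hy)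
  apply abs_le_of_sq_le _ (mul_nonneg hβ.le (by nlinarith : (0:ℝ) ≤ t^2 - y^2))
  nlinarith [sq_nonneg (((G (I*t)).re - (G (I*y)).re) * (2*t*y))]

/-- Monotonicity of `Im G(it) / t`. -/
lemma im_div_mono {G : ℂ → ℂ} (hd : DifferentiableOn ℂ G U) (hm : ∀ z ∈ U, 0 < (G z).im)
    {y t : ℝ} (hy : 0 < y) (hyt : y ≤ t) :
    (G (I*t)).im / t ≤ (G (I*y)).im / y := by
  have h := im_bound hd hm hy hyt
  have ht : 0 < t := lt_of_lt_of_le hy hyt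
  rw [abs_le] at h
  rw [div_le_div_iff₀ ht hy]
  nlinarith [h.2]

set_option maxHeartbeats 1600000 in
lemma key {G : ℂ → ℂ} (hd : DifferentiableOn ℂ G U) (hm : ∀ z ∈ U, 0 < (G z).im) :
    Tendsto (fun y : ℝ => ‖G (I*y)‖ / y) atTop (𝓝 0) ∨
      ∃ b : ℝ, 0 < b ∧ Tendsto (fun y : ℝ => G (I*y) / (I*y)) atTop (𝓝 (b:ℂ)) := by
  set f : ℝ → ℝ := fun y => (G (I * (max 1 y : ℝ))).im / (max 1 y) with hf
  have hmax : ∀ y : ℝ, (0:ℝ) < max 1 y := fun y => lt_of_lt_of_le one_pos (le_max_left _ _)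
  have hfpos : ∀ y, 0 < f y := fun y => div_pos (hm _ (mem_U (hmax y))) (hmax y)
  have hanti : Antitone f := fun s t hst =>
    im_div_mono hd hm (hmax s) (max_le_max le_rfl hst)
  have hbdd : BddBelow (Set.range f) := ⟨0, by rintro z ⟨y, rfl⟩; exact (hfpos y).le⟩
  set b := ⨅ y, f y with hb
  have hbnn : 0 ≤ b := le_ciInf fun y => (hfpos y).le
  have hfb : ∀ y, b ≤ f y := fun y => ciInf_le hbdd y
  have htend : Tendsto f atTop (𝓝 b) := tendsto_atTop_ciInf hanti hbdd
  have hfeq : ∀ t : ℝ, 1 ≤ t → f t = (G (I*t)).im / t := by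
    intro t ht; rw [hf]; simp only [max_eq_right ht]
  have him : Tendsto (fun t : ℝ => (G (I*t)).im / t) atTop (𝓝 b) := by
    apply htend.congr'
    filter_upwards [eventually_ge_atTop 1] with t ht
    exact hfeq t ht
  -- the real part divided by t tends to 0
  have hre : Tendsto (fun t : ℝ => (G (I*t)).re / t) atTop (𝓝 0) := by
    rw [Metric.tendsto_atTop]
    intro δ hδ
    rcases hbnn.lt_or_eq with hbpos | hb0
    · -- positive case
      set ε := min (b/2) (δ^2/(8*(b+1))) with hε
      have hεpos : 0 < ε := lt_min (by linarith) (by positivity)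
      have hεb : ε ≤ b/2 := min_le_left _ _
      have hεδ : (b+ε)*ε ≤ δ^2/4 := by
        have h1 : ε ≤ δ^2/(8*(b+1)) := min_le_right _ _
        have h2 : b + ε ≤ 2*(b+1) := by linarith
        calc (b+ε)*ε ≤ (2*(b+1)) * (δ^2/(8*(b+1))) :=
              mul_le_mul h2 h1 hεpos.le (by positivity)
          _ = δ^2/4 := by field_simp; ring
      obtain ⟨y₀, hy₀⟩ := exists_lt_of_ciInf_lt (show ⨅ y, f y < b + ε by
        rw [← hb]; linarith)
      set y := max 1 y₀ with hysx
      have hy1 : (1:ℝ) ≤ y := le_max_left _ _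
      have hy0 : (0:ℝ) < y := lt_of_lt_of_le one_pos hy1
      set α := (G (I*y)).re with hα
      set β := (G (I*y)).im with hβd
      have hβpos : 0 < β := hm _ (mem_U hy0)
      have hβup : β / y < b + ε := hy₀
      have hβlo : b ≤ β / y := by
        have := hfb y₀; rwa [hf] at this
      have hβup' : β ≤ (b+ε)*y := by
        rw [div_lt_iff₀ hy0] at hβup; linarith
      have hβlo' : b*y ≤ β := by
        rw [le_div_iff₀ hy0] at hβlo; exact hβlo
      refine ⟨max (2*y) (2*(|α|+1)/δ), fun t ht => ?_⟩
      have ht2y : 2*y ≤ t := le_trans (le_max_left _ _) ht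
      have htα : 2*(|α|+1)/δ ≤ t := le_trans (le_max_right _ _) ht
      have hyt : y ≤ t := by linarith
      have ht0 : 0 < t := lt_of_lt_of_le hy0 hyt
      have ht1 : (1:ℝ) ≤ t := le_trans hy1 hyt
      have hy2 : 4*y^2 ≤ t^2 := by
        linarith [mul_nonneg (by linarith : (0:ℝ) ≤ t - 2*y) (by linarith : (0:ℝ) ≤ t + 2*y)]
      set x := (G (I*t)).re with hx
      set v := (G (I*t)).im with hv
      have hbt : b * t ≤ v := by
        have h1 := hfb t
        rw [hfeq t ht1, ← hv] at h1
        have h2 := mul_le_mul_of_nonneg_right h1 ht0.le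
        rwa [div_mul_cancel₀ _ (ne_of_gt ht0)] at h2
      have hdisk := disk hd hm hy0 hyt
      rw [← hx, ← hv, ← hα, ← hβd] at hdisk
      have f1 : 0 ≤ β - b*y := by linarith
      have f2 : β - b*y ≤ ε*y := by linarith
      have f3 : 0 ≤ b*t^2 - β*y := by
        have e1 : β*y ≤ ((b+ε)*y)*y := mul_le_mul_of_nonneg_right hβup' hy0.le
        have e2 : ε*(y*y) ≤ (b/2)*(y*y) :=
          mul_le_mul_of_nonneg_right hεb (mul_nonneg hy0.le hy0.le)
        have e3 : b*(4*y^2) ≤ b*t^2 := mul_le_mul_of_nonneg_left hy2 hbpos.le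
        have e0 : (0:ℝ) ≤ b*(y*y) := by positivity
        linarith
      have f4 : b*t^2 - β*y ≤ b*t^2 := by linarith [mul_nonneg hβpos.le hy0.le]
      have hD : 0 ≤ 2*t*y*(b*t) - β*(t^2+y^2) := by
        have e4 : β*(t^2+y^2) ≤ ((b+ε)*y)*(t^2+y^2) :=
          mul_le_mul_of_nonneg_right hβup' (by positivity)
        have e5a : ε*(t^2+y^2) ≤ (b/2)*(t^2+y^2) :=
          mul_le_mul_of_nonneg_right hεb (by positivity)
        have e5c : (b+ε)*(t^2+y^2) ≤ (3*b/2)*(t^2+t^2/4) := by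
          linarith [mul_nonneg hbpos.le (by linarith : (0:ℝ) ≤ t^2 - 4*y^2)]
        have e6 : y*((b+ε)*(t^2+y^2)) ≤ y*((3*b/2)*(t^2+t^2/4)) :=
          mul_le_mul_of_nonneg_left e5c hy0.le
        have e7 : (0:ℝ) ≤ y*(b*t^2) := by positivity
        linarith
      have e7 : 2*t*y*(b*t) ≤ v*(2*t*y) := by
        have := mul_le_mul_of_nonneg_left hbt (by positivity : (0:ℝ) ≤ 2*t*y)
        linarith
      have hsq : (2*t*y*(b*t) - β*(t^2+y^2))^2 ≤ (v*(2*t*y) - β*(t^2+y^2))^2 := by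
        have hAB : 2*t*y*(b*t) - β*(t^2+y^2) ≤ v*(2*t*y) - β*(t^2+y^2) := by linarith
        have := mul_self_le_mul_self hD hAB
        linarith [this]
      have hid : (β*(t^2-y^2))^2 - (2*t*y*(b*t) - β*(t^2+y^2))^2
          = 4*t^2*y*((β - b*y)*(b*t^2 - β*y)) := by ring
      have hprod : (β - b*y)*(b*t^2 - β*y) ≤ (ε*y)*(b*t^2) :=
        mul_le_mul f2 f4 f3 (by positivity)
      have e8 : 4*t^2*y*((β - b*y)*(b*t^2 - β*y)) ≤ 4*t^2*y*((ε*y)*(b*t^2)) :=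
        mul_le_mul_of_nonneg_left hprod (by positivity)
      have e9 : (0:ℝ) ≤ ε^2*t^4*y^2 := by positivity
      have hre2 : (x - α)^2 * (2*t*y)^2 ≤ ((b+ε)*ε*t^2) * (2*t*y)^2 := by
        linarith [hdisk, hsq, hid, e8, e9]
      have hre3 : (x - α)^2 ≤ (δ*t/2)^2 := by
        have h5 : (x - α)^2 ≤ (b+ε)*ε*t^2 := by
          have hq : (0:ℝ) < (2*t*y)^2 := by positivity
          exact le_of_mul_le_mul_right hre2 hq
        have h6 : (b+ε)*ε*t^2 ≤ (δ^2/4)*t^2 :=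
          mul_le_mul_of_nonneg_right hεδ (sq_nonneg t)
        calc (x - α)^2 ≤ (δ^2/4)*t^2 := le_trans h5 h6
          _ = (δ*t/2)^2 := by ring
      have hre4 : |x - α| ≤ δ*t/2 := abs_le_of_sq_le hre3 (by positivity)
      rw [Real.dist_eq, sub_zero, abs_div, _root_.abs_of_pos ht0, div_lt_iff₀ ht0]
      have hαt : |α| < δ*t/2 := by
        rw [div_le_iff₀ hδ] at htα
        calc |α| < |α| + 1 := by linarith
          _ ≤ δ*t/2 := by linarith
      calc |x| ≤ |α| + |x - α| := by linarith [abs_sub_abs_le_abs_sub x α]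
        _ < δ*t/2 + δ*t/2 := by linarith
        _ = δ*t := by ring
    · -- b = 0 case
      obtain ⟨y₀, hy₀⟩ := exists_lt_of_ciInf_lt (show ⨅ y, f y < δ/2 by
        rw [← hb, ← hb0]; linarith)
      set y := max 1 y₀ with hysx
      have hy1 : (1:ℝ) ≤ y := le_max_left _ _
      have hy0 : (0:ℝ) < y := lt_of_lt_of_le one_pos hy1
      set α := (G (I*y)).re with hα
      set β := (G (I*y)).im with hβd
      have hβpos : 0 < β := hm _ (mem_U hy0)
      have hβup : β / y < δ/2 := hy₀
      have hβup' : β < (δ/2)*y := by rw [div_lt_iff₀ hy0] at hβup; linarith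
      refine ⟨max y (4*(|α|+1)/δ), fun t ht => ?_⟩
      have hyt : y ≤ t := le_trans (le_max_left _ _) ht
      have htα : 4*(|α|+1)/δ ≤ t := le_trans (le_max_right _ _) ht
      have ht0 : 0 < t := lt_of_lt_of_le hy0 hyt
      set x := (G (I*t)).re with hx
      have hrb := re_bound hd hm hy0 hyt
      rw [← hx, ← hα, ← hβd] at hrb
      have hxα : |x - α| ≤ δ*t/4 := by
        have h1 : |x - α| * (2*t*y) ≤ β * t^2 := by
          linarith [mul_nonneg hβpos.le (sq_nonneg y)]
        have h2 : β * t^2 ≤ ((δ/2)*y) * t^2 :=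
          mul_le_mul_of_nonneg_right hβup'.le (sq_nonneg t)
        have h3 : |x - α| * (2*t*y) ≤ (δ*t/4)*(2*t*y) := by linarith
        exact le_of_mul_le_mul_right h3 (by positivity)
      rw [Real.dist_eq, sub_zero, abs_div, _root_.abs_of_pos ht0, div_lt_iff₀ ht0]
      have hαt : |α| < δ*t/4 := by
        rw [div_le_iff₀ hδ] at htα
        calc |α| < |α| + 1 := by linarith
          _ ≤ δ*t/4 := by linarith
      calc |x| ≤ |α| + |x - α| := by linarith [abs_sub_abs_le_abs_sub x α]
        _ < δ*t/4 + δ*t/4 := by linarith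
        _ ≤ δ*t := by linarith [mul_pos hδ ht0]
  rcases hbnn.lt_or_eq with hbpos | hb0
  · right
    refine ⟨b, hbpos, ?_⟩
    have t1 : Tendsto (fun t : ℝ => (((G (I*t)).im / t : ℝ) : ℂ)) atTop (𝓝 (b:ℂ)) :=
      (Complex.continuous_ofReal.tendsto b).comp him
    have t2 : Tendsto (fun t : ℝ => (((G (I*t)).re / t : ℝ) : ℂ)) atTop (𝓝 (0:ℂ)) :=
      (Complex.continuous_ofReal.tendsto 0).comp hre
    have t3 := t1.sub (t2.mul_const I)
    rw [show (b:ℂ) - 0*I = (b:ℂ) by ring] at t3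
    apply t3.congr'
    filter_upwards [eventually_gt_atTop 0] with t ht0
    have hIt : (I * (t:ℂ)) ≠ 0 :=
      mul_ne_zero I_ne_zero (Complex.ofReal_ne_zero.mpr (ne_of_gt ht0))
    have ht' : (t:ℝ) ≠ 0 := ne_of_gt ht0
    apply Complex.ext
    · simp [Complex.div_re, Complex.div_im, Complex.normSq_apply, Complex.mul_re,
        Complex.mul_im]
    · simp [Complex.div_re, Complex.div_im, Complex.normSq_apply, Complex.mul_re,
        Complex.mul_im]
  · left
    rw [← hb0] at him
    have h1 : ∀ᶠ t : ℝ in atTop,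
        ‖G (I*t)‖ / t ≤ |(G (I*t)).re / t| + |(G (I*t)).im / t| := by
      filter_upwards [eventually_gt_atTop 0] with t ht0
      have := Complex.norm_le_abs_re_add_abs_im (G (I*t))
      rw [abs_div, abs_div, _root_.abs_of_pos ht0, ← add_div, div_le_div_iff₀ ht0 ht0]
      nlinarith [norm_nonneg (G (I*t))]
    have h2 : ∀ᶠ t : ℝ in atTop, (0:ℝ) ≤ ‖G (I*t)‖ / t := by
      filter_upwards [eventually_gt_atTop 0] with t ht0
      positivity
    have h3 : Tendsto (fun t : ℝ => |(G (I*t)).re / t| + |(G (I*t)).im / t|) atTop (𝓝 0) := by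
      have := (hre.abs.add him.abs)
      simpa using this
    exact tendsto_of_tendsto_of_tendsto_of_le_of_le' tendsto_const_nhds h3 h2 h1

end HerglotzAux

def IsHerglotz (F : ℂ → ℂ) : Prop :=
  DifferentiableOn ℂ F {z : ℂ | 0 < z.im} ∧
    Set.MapsTo F {z : ℂ | 0 < z.im} {w : ℂ | 0 ≤ w.im}

theorem herglotz_decay (F : ℂ → ℂ) (hF : IsHerglotz F)
    (hne : ∃ z : ℂ, 0 < z.im ∧ F z ≠ 0) :
    Tendsto (fun y : ℝ => y * ‖F (Complex.I * y)‖) atTop atTop ∨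
      ∃ c : ℝ, 0 < c ∧
        Tendsto (fun y : ℝ => -Complex.I * y * F (Complex.I * y)) atTop (nhds (c : ℂ)) := by
  open HerglotzAux in
  obtain ⟨z₀, hz₀, hFz₀⟩ := hne
  have hU0 : z₀ ∈ HerglotzAux.U := hz₀
  have han : AnalyticOnNhd ℂ F HerglotzAux.U :=
    hF.1.analyticOnNhd HerglotzAux.isOpen_U
  rcases han.is_constant_or_isOpen HerglotzAux.preconnected_U with ⟨w, hw⟩ | hopen
  · -- constant case
    left
    have hw0 : w ≠ 0 := by rw [← hw z₀ hU0]; exact hFz₀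
    have habs : 0 < ‖w‖ := norm_pos_iff.mpr hw0
    have h1 : Tendsto (fun y : ℝ => y * ‖w‖) atTop atTop :=
      Tendsto.atTop_mul_const habs tendsto_id
    apply h1.congr'
    filter_upwards [eventually_gt_atTop 0] with y hy
    rw [hw _ (HerglotzAux.mem_U hy)]
  · -- nonconstant: F maps into the open upper half plane
    have hFim : ∀ z ∈ HerglotzAux.U, 0 < (F z).im := by
      intro z hz
      rcases (show (0:ℝ) ≤ (F z).im from hF.2 hz).lt_or_eq with h | h
      · exact h
      · exfalso
        have ho : IsOpen (F '' HerglotzAux.U) :=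
          hopen _ subset_rfl HerglotzAux.isOpen_U
        obtain ⟨ε, hε, hball⟩ := Metric.isOpen_iff.mp ho (F z) ⟨z, hz, rfl⟩
        have hmem : F z - Complex.I * (ε/2) ∈ Metric.ball (F z) ε := by
          rw [Metric.mem_ball, dist_eq_norm]
          simp only [sub_sub_cancel_left, norm_neg]
          rw [norm_mul, Complex.norm_I, one_mul]
          rw [show ((ε:ℂ)/2) = ((ε/2 : ℝ) : ℂ) by push_cast; ring]
          rw [Complex.norm_real, Real.norm_eq_abs, _root_.abs_of_pos (by linarith : (0:ℝ) < ε/2)]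
          linarith
        obtain ⟨z', hz', hFz'⟩ := hball hmem
        have h2 : 0 ≤ (F z').im := hF.2 hz'
        rw [hFz'] at h2
        simp only [Complex.sub_im, Complex.mul_im, Complex.I_re, Complex.I_im,
          Complex.ofReal_re, Complex.ofReal_im] at h2
        rw [← h] at h2
        simp at h2
        linarith
    set G : ℂ → ℂ := fun z => -(F z)⁻¹ with hG
    have hFne : ∀ z ∈ HerglotzAux.U, F z ≠ 0 := by
      intro z hz h
      have := hFim z hz
      rw [h] at this
      simp at this
    have hGd : DifferentiableOn ℂ G HerglotzAux.U :=
      (hF.1.inv hFne).neg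
    have hGm : ∀ z ∈ HerglotzAux.U, 0 < (G z).im := by
      intro z hz
      show 0 < (-(F z)⁻¹).im
      rw [Complex.neg_im, Complex.inv_im, neg_div, neg_neg]
      exact div_pos (hFim z hz) (Complex.normSq_pos.mpr (hFne z hz))
    have hGne : ∀ y : ℝ, 0 < y → G (Complex.I * y) ≠ 0 := by
      intro y hy h
      have := hGm _ (HerglotzAux.mem_U hy)
      rw [h] at this
      simp at this
    rcases HerglotzAux.key hGd hGm with h | ⟨b, hb, h⟩
    · left
      have hpos : ∀ᶠ y : ℝ in atTop, ‖G (Complex.I * y)‖ / y ∈ Set.Ioi (0:ℝ) := by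
        filter_upwards [eventually_gt_atTop 0] with y hy
        exact div_pos (norm_pos_iff.mpr (hGne y hy)) hy
      have h2 : Tendsto (fun y : ℝ => ‖G (Complex.I * y)‖ / y) atTop (𝓝[>] 0) :=
        tendsto_nhdsWithin_of_tendsto_nhds_of_eventually_within _ h hpos
      have h3 := tendsto_inv_nhdsGT_zero.comp h2
      apply h3.congr'
      filter_upwards [eventually_gt_atTop 0] with y hy
      have hFy : F (Complex.I * y) ≠ 0 := hFne _ (HerglotzAux.mem_U hy)
      show (‖G (Complex.I * y)‖ / y)⁻¹ = y * ‖F (Complex.I * y)‖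
      have hGabs : ‖G (Complex.I * y)‖ = (‖F (Complex.I * y)‖)⁻¹ := by
        rw [hG]; simp [norm_inv]
      rw [hGabs]
      have hFa : ‖F (Complex.I * y)‖ ≠ 0 :=
        (norm_pos_iff.mpr hFy).ne'
      field_simp
    · right
      refine ⟨b⁻¹, inv_pos.mpr hb, ?_⟩
      have hbne : (b:ℂ) ≠ 0 := by exact_mod_cast hb.ne'
      have h2 := h.inv₀ hbne
      rw [show ((b:ℂ))⁻¹ = ((b⁻¹ : ℝ) : ℂ) by push_cast; ring] at h2
      apply h2.congr'
      filter_upwards [eventually_gt_atTop 0] with y hy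
      have hFy : F (Complex.I * y) ≠ 0 := hFne _ (HerglotzAux.mem_U hy)
      have hy' : ((y:ℝ):ℂ) ≠ 0 := Complex.ofReal_ne_zero.mpr (ne_of_gt hy)
      show (G (Complex.I * y) / (Complex.I * y))⁻¹ = -Complex.I * y * F (Complex.I * y)
      rw [hG]
      field_simp
end

section
/- If F is a Herglotz function (holomorphic on ℂ⁺ with values in the closed upper half plane) and p is a real polynomial with deg p ≥ 2, then F(z) + p(z) is not a Herglotz function. -/
open Complex Polynomial

open Metric

lemma herglotz_arith (s t u v bim aim zim A : ℝ) (hv : 0 < v) (ht : 0 < t)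
    (hs0 : 0 ≤ s) (hu0 : 0 ≤ u) (hut : u * t ≤ s * v) (hts : t^2 - s^2 = 4 * zim)
    (hst : s < t) (hvu : v ≤ u + 2 * aim) (hbu : bim ≤ aim + u)
    (hsA : s ≤ A) (htA : t ≤ A) (ha : 0 < aim) (hz : 0 < zim) :
    bim ≤ aim * A^2 / zim := by
  have h5 : u * (t - s) ≤ 2 * s * aim := by nlinarith
  have h6 : bim * (t - s) ≤ aim * (t + s) := by nlinarith
  have h7 : bim * (4 * zim) ≤ aim * (t + s)^2 := by
    have h6' := mul_le_mul_of_nonneg_right h6 (show (0:ℝ) ≤ t + s by linarith)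
    nlinarith
  have h8 : aim * (t + s)^2 ≤ aim * (2 * A)^2 := by
    apply mul_le_mul_of_nonneg_left _ (le_of_lt ha)
    nlinarith
  rw [le_div_iff₀ hz]
  nlinarith

lemma herglotz_growth (G : ℂ → ℂ) (hd : DifferentiableOn ℂ G {z : ℂ | 0 < z.im})
    (hm : Set.MapsTo G {z : ℂ | 0 < z.im} {z : ℂ | 0 < z.im}) {z : ℂ} (hz : 0 < z.im) :
    (G z).im ≤ (G Complex.I).im * (‖z‖ + 1)^2 / z.im := by
  set a := G Complex.I with ha_def
  have hI : (Complex.I : ℂ) ∈ {z : ℂ | 0 < z.im} := by simp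
  have ha : 0 < a.im := hm hI
  set Ψ : ℂ → ℂ := fun ζ => Complex.I * ((1 + ζ) / (1 - ζ)) with hΨ_def
  set Φ : ℂ → ℂ := fun w => (w - a) / (w - (starRingEnd ℂ) a) with hΦ_def
  -- Ψ maps ball 0 1 into upper half plane
  have hball : ∀ ζ : ℂ, ζ ∈ ball (0:ℂ) 1 → Complex.normSq ζ < 1 := by
    intro ζ hζ
    rw [mem_ball_zero_iff] at hζ
    have : ‖ζ‖ < 1 := hζ
    nlinarith [Complex.sq_norm ζ, norm_nonneg ζ]
  have hΨ1 : ∀ ζ : ℂ, ζ ∈ ball (0:ℂ) 1 → (1 : ℂ) - ζ ≠ 0 := by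
    intro ζ hζ h
    have : ζ = 1 := by linear_combination -h
    rw [this] at hζ
    simp at hζ
  have hΨmaps : ∀ ζ : ℂ, ζ ∈ ball (0:ℂ) 1 → 0 < (Ψ ζ).im := by
    intro ζ hζ
    have h1 := hball ζ hζ
    have h2 := hΨ1 ζ hζ
    have h3 : 0 < Complex.normSq (1 - ζ) := by
      rwa [Complex.normSq_pos]
    have : (Ψ ζ).im = ((1 + ζ) / (1 - ζ)).re := by
      simp [hΨ_def, Complex.mul_im]
    rw [this, Complex.div_re, ← add_div]
    apply div_pos _ h3
    rw [Complex.normSq_apply] at h1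
    simp only [Complex.add_re, Complex.add_im, Complex.sub_re, Complex.sub_im,
      Complex.one_re, Complex.one_im]
    nlinarith
  -- Φ maps upper half plane into ball 0 1
  have habs : ∀ u v : ℂ, Complex.normSq u < Complex.normSq v → ‖u‖ < ‖v‖ := by
    intro u v h
    rw [Complex.norm_def, Complex.norm_def]
    exact Real.sqrt_lt_sqrt (Complex.normSq_nonneg u) h
  have hΦden : ∀ w : ℂ, 0 < w.im → w - (starRingEnd ℂ) a ≠ 0 := by
    intro w hw h
    have : (w - (starRingEnd ℂ) a).im = w.im + a.im := by simp
    rw [h] at this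
    simp at this
    linarith
  have hΦmaps : ∀ w : ℂ, 0 < w.im → Φ w ∈ ball (0:ℂ) 1 := by
    intro w hw
    rw [mem_ball_zero_iff]
    show ‖(w - a) / (w - (starRingEnd ℂ) a)‖ < 1
    rw [norm_div, div_lt_one]
    · apply habs
      rw [Complex.normSq_apply, Complex.normSq_apply]
      simp only [Complex.sub_re, Complex.sub_im, Complex.conj_re, Complex.conj_im]
      nlinarith
    · exact norm_pos_iff.mpr (hΦden w hw)
  -- differentiability
  have hΨdiff : DifferentiableOn ℂ Ψ (ball (0:ℂ) 1) := by
    apply DifferentiableOn.mul (differentiableOn_const _)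
    exact DifferentiableOn.div
      ((differentiableOn_const _).add differentiableOn_id)
      ((differentiableOn_const _).sub differentiableOn_id)
      hΨ1
  have hΦdiff : DifferentiableOn ℂ Φ {w : ℂ | 0 < w.im} := by
    exact DifferentiableOn.div
      (differentiableOn_id.sub (differentiableOn_const _))
      (differentiableOn_id.sub (differentiableOn_const _))
      (fun w hw => hΦden w hw)
  set f : ℂ → ℂ := fun ζ => Φ (G (Ψ ζ)) with hf_def
  have hfdiff : DifferentiableOn ℂ f (ball (0:ℂ) 1) := by
    apply DifferentiableOn.comp hΦdiff
    · exact DifferentiableOn.comp hd hΨdiff (fun ζ hζ => hΨmaps ζ hζ)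
    · exact fun ζ hζ => hm (hΨmaps ζ hζ)
  have hΨ0 : Ψ 0 = Complex.I := by simp [hΨ_def]
  have hf0 : f 0 = 0 := by
    simp only [hf_def, hΨ0, hΦ_def, ← ha_def, sub_self, zero_div]
  have hfmaps : Set.MapsTo f (ball (0:ℂ) 1) (ball (f 0) 1) := by
    rw [hf0]
    intro ζ hζ
    exact hΦmaps _ (hm (hΨmaps ζ hζ))
  -- the point ζz
  have hzI : z + Complex.I ≠ 0 := by
    intro h
    have h2 : (z + Complex.I).im = z.im + 1 := by simp
    rw [h] at h2
    simp at h2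
    linarith
  set ζz : ℂ := (z - Complex.I) / (z + Complex.I) with hζz_def
  have hζzball : ζz ∈ ball (0:ℂ) 1 := by
    rw [mem_ball_zero_iff]
    show ‖(z - Complex.I)/(z + Complex.I)‖ < 1
    rw [norm_div, div_lt_one (norm_pos_iff.mpr hzI)]
    apply habs
    rw [Complex.normSq_apply, Complex.normSq_apply]
    simp only [Complex.sub_re, Complex.sub_im, Complex.add_re, Complex.add_im,
      Complex.I_re, Complex.I_im]
    nlinarith
  have hΨζz : Ψ ζz = z := by
    simp only [hΨ_def, hζz_def]
    have h1 : (1:ℂ) + (z - Complex.I)/(z + Complex.I) = 2*z/(z+Complex.I) := by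
      field_simp
      ring
    have h2 : (1:ℂ) - (z - Complex.I)/(z + Complex.I) = 2*Complex.I/(z+Complex.I) := by
      field_simp
      ring
    rw [h1, h2]
    rw [div_div_div_cancel_right₀]
    · field_simp [Complex.I_ne_zero]
    · exact hzI
  -- Schwarz lemma
  have key := Complex.dist_le_div_mul_dist_of_mapsTo_ball hfdiff (hfmaps.mono_right ball_subset_closedBall) hζzball
  rw [hf0] at key
  rw [dist_zero_right, dist_zero_right] at key
  norm_num at key
  have hfζz : f ζz = (G z - a) / (G z - (starRingEnd ℂ) a) := by
    simp only [hf_def, hΨζz, hΦ_def]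
  rw [hfζz] at key
  -- arithmetic
  set b := G z with hb_def
  have hbim : 0 < b.im := hm hz
  set s := ‖z - Complex.I‖ with hs_def
  set t := ‖z + Complex.I‖ with ht_def
  set u := ‖b - a‖ with hu_def
  set v := ‖b - (starRingEnd ℂ) a‖ with hv_def
  have hv : 0 < v := norm_pos_iff.mpr (hΦden b hbim)
  have ht : 0 < t := norm_pos_iff.mpr hzI
  have hs0 : 0 ≤ s := norm_nonneg _
  have hu0 : 0 ≤ u := norm_nonneg _
  have key' : u / v ≤ s / t := by
    rw [hζz_def, norm_div, norm_div] at key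
    exact key
  have hut : u * t ≤ s * v := by
    rw [div_le_div_iff₀ hv ht] at key'
    linarith
  have hts : t^2 - s^2 = 4 * z.im := by
    rw [ht_def, hs_def, Complex.sq_norm, Complex.sq_norm,
      Complex.normSq_apply, Complex.normSq_apply]
    simp only [Complex.sub_re, Complex.sub_im, Complex.add_re, Complex.add_im,
      Complex.I_re, Complex.I_im]
    ring
  have hst : s < t := by nlinarith
  have haconj : ‖a - (starRingEnd ℂ) a‖ = 2 * a.im := by
    have e : a - (starRingEnd ℂ) a = Complex.I * ((2 * a.im : ℝ) : ℂ) := by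
      apply Complex.ext <;> simp <;> ring
    rw [e, norm_mul, Complex.norm_I, Complex.norm_real, Real.norm_eq_abs, one_mul]
    rw [abs_of_pos (by linarith)]
  have hvu : v ≤ u + 2 * a.im := by
    have e : b - (starRingEnd ℂ) a = (b - a) + (a - (starRingEnd ℂ) a) := by ring
    calc v = ‖(b - a) + (a - (starRingEnd ℂ) a)‖ := by rw [hv_def, ← e]
      _ ≤ ‖b - a‖ + ‖a - (starRingEnd ℂ) a‖ := norm_add_le _ _
      _ = u + 2 * a.im := by rw [haconj]
  have hbu : b.im ≤ a.im + u := by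
    have h1 : (b - a).im = b.im - a.im := by simp
    have h2 : |(b - a).im| ≤ ‖b - a‖ := Complex.abs_im_le_norm _
    rw [h1] at h2
    have := abs_le.mp h2
    linarith [this.2]
  have hsA : s ≤ ‖z‖ + 1 := by
    have := norm_sub_le z Complex.I
    simpa using this
  have htA : t ≤ ‖z‖ + 1 := by
    have := norm_add_le z Complex.I
    simpa using this
  exact herglotz_arith s t u v b.im a.im z.im (‖z‖ + 1)
    hv ht hs0 hu0 hut hts hst hvu hbu hsA htA ha hz

theorem herglotz_add_poly_not_herglotz (F : ℂ → ℂ) (hF : IsHerglotz F)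
    (p : ℝ[X]) (hdeg : 2 ≤ p.natDegree) :
    ¬ IsHerglotz (fun z => F z + (p.map (algebraMap ℝ ℂ)).eval z) := by
  intro hG
  obtain ⟨hFd, hFm⟩ := hF
  obtain ⟨_, hGm⟩ := hG
  set n := p.natDegree with hn
  have hp0 : p ≠ 0 := by
    intro h
    rw [hn, h, Polynomial.natDegree_zero] at hdeg
    omega
  have hc : p.coeff n ≠ 0 := by
    rw [hn]
    exact Polynomial.leadingCoeff_ne_zero.mpr hp0
  set c := p.coeff n with hc_def
  have hnR : (2:ℝ) ≤ (n:ℝ) := by exact_mod_cast hdeg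
  have hπ := Real.pi_pos
  set θ : ℝ := if 0 < c then 3*Real.pi/(2*n) else Real.pi/(2*n) with hθ_def
  have hθpos : 0 < θ := by
    rw [hθ_def]; split <;> positivity
  have hθlt : θ < Real.pi := by
    rw [hθ_def]
    split
    · rw [div_lt_iff₀ (by linarith)]
      nlinarith
    · rw [div_lt_iff₀ (by linarith)]
      nlinarith
  have hsinθ : 0 < Real.sin θ := Real.sin_pos_of_pos_of_lt_pi hθpos hθlt
  have hsin_nθ : c * Real.sin (n * θ) < 0 := by
    rw [hθ_def]
    split_ifs with h
    · have e1 : (n:ℝ) * (3*Real.pi/(2*n)) = 3*Real.pi/2 := by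
        field_simp
      have e2 : Real.sin (3*Real.pi/2) = -1 := by
        have e3 : 3*Real.pi/2 = Real.pi/2 + Real.pi := by ring
        rw [e3, Real.sin_add_pi, Real.sin_pi_div_two]
      rw [e1, e2]
      linarith
    · have hcneg : c < 0 := lt_of_le_of_ne (not_lt.mp h) hc
      have e1 : (n:ℝ) * (Real.pi/(2*n)) = Real.pi/2 := by
        field_simp
      rw [e1, Real.sin_pi_div_two]
      linarith
  -- the shifted function G = F + i
  have hGd : DifferentiableOn ℂ (fun w => F w + Complex.I) {z : ℂ | 0 < z.im} :=
    hFd.add_const _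
  have hGm' : Set.MapsTo (fun w => F w + Complex.I) {z : ℂ | 0 < z.im} {z : ℂ | 0 < z.im} := by
    intro w hw
    have := hFm hw
    simp only [Set.mem_setOf_eq, Complex.add_im, Complex.I_im] at *
    linarith
  set B : ℝ := 4 * ((F Complex.I).im + 1) / Real.sin θ with hB_def
  set Q : ℝ[X] := Polynomial.C B * Polynomial.X +
      ∑ k ∈ Finset.range (n+1), Polynomial.C (p.coeff k * Real.sin (k*θ)) * Polynomial.X^k
    with hQ_def
  have hQeval : ∀ R : ℝ, Polynomial.eval R Q =
      B*R + ∑ k ∈ Finset.range (n+1), p.coeff k * Real.sin (k*θ) * R^k := by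
    intro R
    rw [hQ_def]
    simp [Polynomial.eval_finset_sum]
  -- nonnegativity for R ≥ 1
  have hQnonneg : ∀ R : ℝ, 1 ≤ R → 0 ≤ Polynomial.eval R Q := by
    intro R hR
    have hR0 : 0 < R := by linarith
    set z : ℂ := (R:ℂ) * Complex.exp ((θ:ℝ) * Complex.I) with hz_def
    have him : z.im = R * Real.sin θ := by
      rw [hz_def]
      simp [Complex.mul_im, Complex.exp_ofReal_mul_I_im]
    have hzim : 0 < z.im := by
      rw [him]; positivity
    have habsz : ‖z‖ = R := by
      rw [hz_def, norm_mul, Complex.norm_real, Real.norm_eq_abs, Complex.norm_exp_ofReal_mul_I, mul_one,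
        abs_of_pos hR0]
    have hFb : (F z).im ≤ B * R := by
      have hg := herglotz_growth _ hGd hGm' hzim
      simp only [Complex.add_im, Complex.I_im] at hg
      rw [habsz, him] at hg
      have hFI : (0:ℝ) ≤ (F Complex.I).im := hFm (by simp)
      have hA : (0:ℝ) < (F Complex.I).im + 1 := by linarith
      have hBR : B * R * (R * Real.sin θ) = 4*((F Complex.I).im+1)*R^2 := by
        rw [hB_def]
        field_simp
      have h3 : ((F Complex.I).im + 1) * (R+1)^2 / (R * Real.sin θ) ≤ B * R := by
        rw [div_le_iff₀ (by positivity), hBR]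
        nlinarith [mul_nonneg (mul_nonneg hA.le (sub_nonneg.mpr hR))
          (show (0:ℝ) ≤ 3*R+1 by linarith)]
      linarith
    have hq : ((p.map (algebraMap ℝ ℂ)).eval z).im
        = ∑ k ∈ Finset.range (n+1), p.coeff k * Real.sin (k*θ) * R^k := by
      rw [Polynomial.eval_map, Polynomial.eval₂_eq_sum_range, Complex.im_sum]
      refine Finset.sum_congr rfl fun k _ => ?_
      have hzk : z ^ k = ((R^k : ℝ) : ℂ) * Complex.exp (((k*θ : ℝ) : ℂ) * Complex.I) := by
        rw [hz_def, mul_pow, ← Complex.exp_nat_mul]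
        push_cast
        ring_nf
      rw [hzk]
      have : algebraMap ℝ ℂ (p.coeff k) = ((p.coeff k : ℝ) : ℂ) := rfl
      rw [this, ← mul_assoc, ← Complex.ofReal_mul]
      simp only [Complex.mul_im, Complex.ofReal_re, Complex.ofReal_im,
        Complex.exp_ofReal_mul_I_im, zero_mul, add_zero]
      ring
    have h0 : (0:ℝ) ≤ (F z).im + ((p.map (algebraMap ℝ ℂ)).eval z).im := by
      have := hGm (show z ∈ {z : ℂ | 0 < z.im} from hzim)
      simpa using this
    rw [hQeval, ← hq]
    linarith
  -- Q has degree n with negative leading coefficient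
  have hQcoeff : Q.coeff n = c * Real.sin (n*θ) := by
    rw [hQ_def, Polynomial.coeff_add]
    have h1 : (Polynomial.C B * Polynomial.X).coeff n = 0 := by
      rw [Polynomial.coeff_C_mul, Polynomial.coeff_X, if_neg (by omega : ¬ 1 = n), mul_zero]
    rw [h1, zero_add, Polynomial.finset_sum_coeff]
    rw [Finset.sum_eq_single n]
    · rw [Polynomial.coeff_C_mul, Polynomial.coeff_X_pow, if_pos rfl, mul_one, hc_def]
    · intro k _ hkn
      rw [Polynomial.coeff_C_mul, Polynomial.coeff_X_pow, if_neg (Ne.symm hkn), mul_zero]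
    · intro h
      exact absurd (Finset.self_mem_range_succ n) h
  have hQcne : Q.coeff n ≠ 0 := by
    rw [hQcoeff]
    exact ne_of_lt hsin_nθ
  have hQnd_le : Q.natDegree ≤ n := by
    apply le_trans (Polynomial.natDegree_add_le _ _)
    apply max_le
    · apply le_trans (Polynomial.natDegree_C_mul_le _ _)
      rw [Polynomial.natDegree_X]
      omega
    · apply Polynomial.natDegree_sum_le_of_forall_le
      intro k hk
      apply le_trans (Polynomial.natDegree_C_mul_le _ _)
      rw [Polynomial.natDegree_X_pow]
      exact Nat.lt_succ_iff.mp (Finset.mem_range.mp hk)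
  have hQnd : Q.natDegree = n :=
    le_antisymm hQnd_le (Polynomial.le_natDegree_of_ne_zero hQcne)
  have hQlead : Q.leadingCoeff ≤ 0 := by
    rw [Polynomial.leadingCoeff, hQnd, hQcoeff]
    linarith
  have hQdegpos : 0 < Q.degree := by
    rw [← Polynomial.natDegree_pos_iff_degree_pos, hQnd]
    omega
  have htend := Polynomial.tendsto_atBot_of_leadingCoeff_nonpos Q hQdegpos hQlead
  have hev : ∀ᶠ R in Filter.atTop, Polynomial.eval R Q < 0 :=
    htend.eventually (Filter.eventually_lt_atBot 0)
  obtain ⟨R, hR1, hRneg⟩ := ((Filter.eventually_ge_atTop (1:ℝ)).and hev).exists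
  exact absurd (hQnonneg R hR1) (not_le.mpr hRneg)
end

section
/- Let T ∈ SL(2,ℂ) satisfy i(T* J T − J) ≥ 0 (positive semidefinite). Then T₁ = I T⁻¹ I also satisfies i(T₁* J T₁ − J) ≥ 0, where I = diag(1, −1). -/
open Matrix
open scoped ComplexOrder

noncomputable def JmatC : Matrix (Fin 2) (Fin 2) ℂ := !![0, -1; 1, 0]

noncomputable def Imat : Matrix (Fin 2) (Fin 2) ℂ := !![1, 0; 0, -1]

/-! The defect `T₁ᴴ J T₁ - J` of `T₁ = I T⁻¹ I` is the congruence of the defect of `T` by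
`S = T⁻¹ I`: since `I` reverses the sign of the form `J`, `Sᴴ (Tᴴ J T) S = Iᴴ J I = -J` and
`T₁ᴴ J T₁ = -Sᴴ J S`. The scalar `i` commutes with the congruence, and
congruence preserves positive semidefiniteness. -/

namespace Matrix

variable {n R : Type*} [Fintype n] [DecidableEq n] [CommRing R] [StarRing R]

def formDefect (J T : Matrix n n R) : Matrix n n R := Tᴴ * J * T - J

theorem formDefect_conj_inv {J T I : Matrix n n R} (hT : IsUnit T.det) (hI : Iᴴ * J * I = -J) :
    formDefect J (I * T⁻¹ * I) = (T⁻¹ * I)ᴴ * formDefect J T * (T⁻¹ * I) := by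
  have hTinv : (T⁻¹)ᴴ * Tᴴ = 1 := by
    rw [← conjTranspose_mul, mul_nonsing_inv T hT, conjTranspose_one]
  have hform : (T⁻¹ * I)ᴴ * (Tᴴ * J * T) * (T⁻¹ * I) = -J := by
    calc (T⁻¹ * I)ᴴ * (Tᴴ * J * T) * (T⁻¹ * I)
        = Iᴴ * ((T⁻¹)ᴴ * Tᴴ) * J * (T * T⁻¹) * I := by simp only [conjTranspose_mul, mul_assoc]
      _ = -J := by rw [hTinv, mul_nonsing_inv T hT, mul_one, mul_one, hI]
  have hconj : (I * T⁻¹ * I)ᴴ * J * (I * T⁻¹ * I) = -((T⁻¹ * I)ᴴ * J * (T⁻¹ * I)) := by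
    calc (I * T⁻¹ * I)ᴴ * J * (I * T⁻¹ * I)
        = Iᴴ * (T⁻¹)ᴴ * (Iᴴ * J * I) * T⁻¹ * I := by simp only [conjTranspose_mul, mul_assoc]
      _ = -((T⁻¹ * I)ᴴ * J * (T⁻¹ * I)) := by
        simp only [hI, conjTranspose_mul, mul_neg, neg_mul, mul_assoc]
  rw [formDefect, formDefect, Matrix.mul_sub, Matrix.sub_mul, hform, hconj]
  abel

end Matrix

theorem Imat_conjTranspose_mul_JmatC_mul_Imat : Imatᴴ * JmatC * Imat = -JmatC := by
  ext i j; fin_cases i <;> fin_cases j <;> simp [Imat, JmatC, mul_apply, Fin.sum_univ_two]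

theorem conj_inv_preserves_J_contraction (T : Matrix (Fin 2) (Fin 2) ℂ)
    (hdet : T.det = 1)
    (h : (Complex.I • (Tᴴ * JmatC * T - JmatC)).PosSemidef) :
    (Complex.I • ((Imat * T⁻¹ * Imat)ᴴ * JmatC * (Imat * T⁻¹ * Imat) - JmatC)).PosSemidef := by
  have hdefect := formDefect_conj_inv (T := T) (by simp [hdet]) Imat_conjTranspose_mul_JmatC_mul_Imat
  rw [← formDefect, hdefect, ← Matrix.smul_mul, ← Matrix.mul_smul]
  exact h.conjTranspose_mul_mul_same (T⁻¹ * Imat)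
end
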